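/- arXiv:2103.01473 — 3 statements merged into one kernel-verified Lean document; each statement's English description precedes it below -/
import Mathlib

section
/- Suppose cos θ0 = sin θ0 · sin θ1 and sin θ1 ≠ 0. Then for all k ∈ ℝ and λ ∈ ℂ, det(Û(k) − λ·I₄) = (λ − λ₁(k))·(λ − λ₂(k))·(λ + 2·s0²·s1²·cos k)², where λ₁(k) = s0²·((1 + s1²)·cos k − i·c1·√(1 + 3·s1²)·sin k) and λ₂(k) = s0²·((1 + s1²)·cos k + i·c1·√(1 + 3·s1²)·sin k). In particular the eigenvalues of Û(k) are λ₁(k), λ₂(k) and the double eigenvalue −2·s0²·s1²·cos k. -/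
open Matrix Complex

/-- The matrix `A` built from `P(θ0,θ1)`. -/
noncomputable def Amat (θ0 θ1 : ℝ) : Matrix (Fin 4) (Fin 4) ℂ :=
  !![0, 0, 0, (Real.cos θ0 : ℂ);
     0, (-((Real.sin θ0 * Real.cos θ1 : ℝ) : ℂ)), ((Real.sin θ0 * Real.sin θ1 : ℝ) : ℂ), 0;
     ((Real.sin θ0 * Real.sin θ1 : ℝ) : ℂ), 0, 0, (-((Real.sin θ0 * Real.cos θ1 : ℝ) : ℂ));
     0, (Real.cos θ0 : ℂ), 0, 0]

/-- The matrix `B` built from `Q(θ0,θ1)`. -/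
noncomputable def Bmat (θ0 θ1 : ℝ) : Matrix (Fin 4) (Fin 4) ℂ :=
  !![((Real.sin θ0 * Real.cos θ1 : ℝ) : ℂ), 0, 0, ((Real.sin θ0 * Real.sin θ1 : ℝ) : ℂ);
     0, 0, (Real.cos θ0 : ℂ), 0;
     (Real.cos θ0 : ℂ), 0, 0, 0;
     0, ((Real.sin θ0 * Real.sin θ1 : ℝ) : ℂ), ((Real.sin θ0 * Real.cos θ1 : ℝ) : ℂ), 0]

/-- The Fourier-space evolution operator `Û(k) = e^{ik} A² + e^{-ik} B²`. -/
noncomputable def Uhat (θ0 θ1 k : ℝ) : Matrix (Fin 4) (Fin 4) ℂ :=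
  Complex.exp (Complex.I * (k : ℂ)) • (Amat θ0 θ1 ^ 2)
    + Complex.exp (-(Complex.I * (k : ℂ))) • (Bmat θ0 θ1 ^ 2)

/-!
Rows 2 and 3 of `Û(k)` differ only by swapping their last two entries, so `(e₃ - e₂)ᵀ` is a left
eigenvector of `Û(k)` for `-2 c0 s0 s1 cos k`, which splits off one linear factor of the
characteristic polynomial. When `c0 = s0 s1`, the complementary `3 × 3` block is `s0²` times a
matrix whose characteristic polynomial, by `e^{ik} e^{-ik} = 1` and `c1² + s1² = 1`, is
`(λ + 2 s1² cos k) (λ² - 2 (1 + s1²) cos k λ + c1² (1 + 3 s1²) + 4 s1⁴ cos² k)`;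
the quadratic has the roots `λ₁ / s0²` and `λ₂ / s0²`.
-/

-- Adding column 3 to column 2 and then subtracting row 2 from row 3 leaves only `U 3 3 - U 2 3`
-- in row 3.
theorem Matrix.det_fin_four_eq_mul_det_fin_three {R : Type*} [CommRing R]
    (U : Matrix (Fin 4) (Fin 4) R) (h0 : U 3 0 = U 2 0) (h1 : U 3 1 = U 2 1)
    (h23 : U 3 2 + U 3 3 = U 2 2 + U 2 3) :
    U.det = (U 3 3 - U 2 3) *
      !![U 0 0, U 0 1, U 0 2 + U 0 3;
         U 1 0, U 1 1, U 1 2 + U 1 3;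
         U 2 0, U 2 1, U 2 2 + U 2 3].det := by
  have h32 : U 3 2 = U 2 2 + U 2 3 - U 3 3 := eq_sub_of_add_eq h23
  rw [det_succ_row_zero, det_fin_three]
  simp [Fin.sum_univ_succ, det_fin_three, Fin.succAbove, h0, h1, h32]
  ring

theorem Matrix.mem_spectrum_of_det_sub_smul_eq_zero {n K : Type*} [Fintype n] [DecidableEq n]
    [Field K] {M : Matrix n n K} {μ : K} (h : (M - μ • (1 : Matrix n n K)).det = 0) :
    μ ∈ spectrum K M := by
  rw [mem_spectrum_iff_isRoot_charpoly, Polynomial.IsRoot, eval_charpoly,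
    ← neg_sub, det_neg, scalar_apply, ← smul_one_eq_diagonal, h, mul_zero]

section

variable {θ0 θ1 : ℝ} {c0 s0 c1 s1 : ℂ}

theorem Amat_sq (hc0 : (Real.cos θ0 : ℂ) = c0) (hs0 : (Real.sin θ0 : ℂ) = s0)
    (hc1 : (Real.cos θ1 : ℂ) = c1) (hs1 : (Real.sin θ1 : ℂ) = s1) :
    Amat θ0 θ1 ^ 2 =
      !![0, c0 ^ 2, 0, 0;
         s0 ^ 2 * s1 ^ 2, s0 ^ 2 * c1 ^ 2, -(s0 ^ 2 * s1 * c1), -(s0 ^ 2 * s1 * c1);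
         0, -(c0 * s0 * c1), 0, c0 * s0 * s1;
         0, -(c0 * s0 * c1), c0 * s0 * s1, 0] := by
  subst hc0 hs0 hc1 hs1
  ext i j
  fin_cases i <;> fin_cases j <;> simp [Amat, sq, mul_apply, Fin.sum_univ_four] <;> ring

theorem Bmat_sq (hc0 : (Real.cos θ0 : ℂ) = c0) (hs0 : (Real.sin θ0 : ℂ) = s0)
    (hc1 : (Real.cos θ1 : ℂ) = c1) (hs1 : (Real.sin θ1 : ℂ) = s1) :
    Bmat θ0 θ1 ^ 2 =
      !![s0 ^ 2 * c1 ^ 2, s0 ^ 2 * s1 ^ 2, s0 ^ 2 * s1 * c1, s0 ^ 2 * s1 * c1;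
         c0 ^ 2, 0, 0, 0;
         c0 * s0 * c1, 0, 0, c0 * s0 * s1;
         c0 * s0 * c1, 0, c0 * s0 * s1, 0] := by
  subst hc0 hs0 hc1 hs1
  ext i j
  fin_cases i <;> fin_cases j <;> simp [Bmat, sq, mul_apply, Fin.sum_univ_four] <;> ring

end

theorem det_Uhat_sub_smul {θ0 θ1 k : ℝ} {c0 s0 c1 s1 C S r : ℂ}
    (hc0 : (Real.cos θ0 : ℂ) = c0) (hs0 : (Real.sin θ0 : ℂ) = s0)
    (hc1 : (Real.cos θ1 : ℂ) = c1) (hs1 : (Real.sin θ1 : ℂ) = s1)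
    (hC : (Real.cos k : ℂ) = C) (hS : (Real.sin k : ℂ) = S) (hr : r ^ 2 = 1 + 3 * s1 ^ 2)
    (h : c0 = s0 * s1) (lam : ℂ) :
    (Uhat θ0 θ1 k - lam • (1 : Matrix (Fin 4) (Fin 4) ℂ)).det =
      (lam - s0 ^ 2 * ((1 + s1 ^ 2) * C - I * (c1 * r * S))) *
        (lam - s0 ^ 2 * ((1 + s1 ^ 2) * C + I * (c1 * r * S))) *
        (lam + 2 * s0 ^ 2 * s1 ^ 2 * C) ^ 2 := by
  have hcs : c1 ^ 2 + s1 ^ 2 = 1 := by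
    rw [← hc1, ← hs1]; exact_mod_cast Real.cos_sq_add_sin_sq θ1
  have hCS : C ^ 2 + S ^ 2 = 1 := by
    rw [← hC, ← hS]; exact_mod_cast Real.cos_sq_add_sin_sq k
  have hef : exp (I * k) * exp (-(I * k)) = 1 := by
    rw [← Complex.exp_add, add_neg_cancel, exp_zero]
  have hsum : exp (I * k) + exp (-(I * k)) = 2 * C := by
    rw [← hC, ofReal_cos, two_cos, mul_comm, neg_mul]
  rw [Uhat, Amat_sq hc0 hs0 hc1 hs1, Bmat_sq hc0 hs0 hc1 hs1,
    det_fin_four_eq_mul_det_fin_three _ (by simp) (by simp) (by simp; ring), det_fin_three]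
  simp only [of_apply, cons_val', cons_val, cons_val_zero, cons_val_one, cons_val_fin_one,
    Matrix.add_apply, Matrix.sub_apply, Matrix.smul_apply, smul_eq_mul, one_apply_eq,
    one_apply_ne, ne_eq, Fin.reduceEq, not_false_eq_true]
  subst h
  grind [I_sq]

theorem Uhat_charpoly_factorization_ballistic_general (θ0 θ1 : ℝ) (c0 s0 c1 s1 : ℝ)
    (hc0 : c0 = Real.cos θ0) (hs0 : s0 = Real.sin θ0)
    (hc1 : c1 = Real.cos θ1) (hs1 : s1 = Real.sin θ1)
    (h : c0 = s0 * s1) :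
    ∀ (k : ℝ) (lam : ℂ),
      (Uhat θ0 θ1 k - lam • (1 : Matrix (Fin 4) (Fin 4) ℂ)).det =
        (lam - ((s0 ^ 2 : ℝ) : ℂ) *
            (((1 + s1 ^ 2) * Real.cos k : ℝ) -
              Complex.I * ((c1 * Real.sqrt (1 + 3 * s1 ^ 2) * Real.sin k : ℝ) : ℂ))) *
        (lam - ((s0 ^ 2 : ℝ) : ℂ) *
            (((1 + s1 ^ 2) * Real.cos k : ℝ) +
              Complex.I * ((c1 * Real.sqrt (1 + 3 * s1 ^ 2) * Real.sin k : ℝ) : ℂ))) *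
        (lam + ((2 * s0 ^ 2 * s1 ^ 2 * Real.cos k : ℝ) : ℂ)) ^ 2 ∧
      (((s0 ^ 2 : ℝ) : ℂ) *
          (((1 + s1 ^ 2) * Real.cos k : ℝ) -
            Complex.I * ((c1 * Real.sqrt (1 + 3 * s1 ^ 2) * Real.sin k : ℝ) : ℂ))
        ∈ spectrum ℂ (Uhat θ0 θ1 k)) ∧
      (((s0 ^ 2 : ℝ) : ℂ) *
          (((1 + s1 ^ 2) * Real.cos k : ℝ) +
            Complex.I * ((c1 * Real.sqrt (1 + 3 * s1 ^ 2) * Real.sin k : ℝ) : ℂ))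
        ∈ spectrum ℂ (Uhat θ0 θ1 k)) ∧
      ((-(2 * s0 ^ 2 * s1 ^ 2 * Real.cos k : ℝ) : ℂ) ∈ spectrum ℂ (Uhat θ0 θ1 k)) := by
  intro k lam
  have hr : ((Real.sqrt (1 + 3 * s1 ^ 2) : ℝ) : ℂ) ^ 2 = 1 + 3 * (s1 : ℂ) ^ 2 := by
    exact_mod_cast Real.sq_sqrt (by positivity)
  have hdet := det_Uhat_sub_smul (congrArg ofReal hc0.symm) (congrArg ofReal hs0.symm)
    (congrArg ofReal hc1.symm) (congrArg ofReal hs1.symm) (ofReal_cos k) (ofReal_sin k) hr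
    (by exact_mod_cast h)
  push_cast
  refine ⟨hdet lam, ?_, ?_, ?_⟩ <;>
    exact mem_spectrum_of_det_sub_smul_eq_zero (by rw [hdet]; ring)

theorem Uhat_charpoly_factorization_ballistic (θ0 θ1 : ℝ) (c0 s0 c1 s1 : ℝ)
    (hc0 : c0 = Real.cos θ0) (hs0 : s0 = Real.sin θ0)
    (hc1 : c1 = Real.cos θ1) (hs1 : s1 = Real.sin θ1)
    (h : c0 = s0 * s1) (hs1ne : s1 ≠ 0) :
    ∀ (k : ℝ) (lam : ℂ),
      (Uhat θ0 θ1 k - lam • (1 : Matrix (Fin 4) (Fin 4) ℂ)).det =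
        (lam - ((s0 ^ 2 : ℝ) : ℂ) *
            (((1 + s1 ^ 2) * Real.cos k : ℝ) -
              Complex.I * ((c1 * Real.sqrt (1 + 3 * s1 ^ 2) * Real.sin k : ℝ) : ℂ))) *
        (lam - ((s0 ^ 2 : ℝ) : ℂ) *
            (((1 + s1 ^ 2) * Real.cos k : ℝ) +
              Complex.I * ((c1 * Real.sqrt (1 + 3 * s1 ^ 2) * Real.sin k : ℝ) : ℂ))) *
        (lam + ((2 * s0 ^ 2 * s1 ^ 2 * Real.cos k : ℝ) : ℂ)) ^ 2 ∧
      (((s0 ^ 2 : ℝ) : ℂ) *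
          (((1 + s1 ^ 2) * Real.cos k : ℝ) -
            Complex.I * ((c1 * Real.sqrt (1 + 3 * s1 ^ 2) * Real.sin k : ℝ) : ℂ))
        ∈ spectrum ℂ (Uhat θ0 θ1 k)) ∧
      (((s0 ^ 2 : ℝ) : ℂ) *
          (((1 + s1 ^ 2) * Real.cos k : ℝ) +
            Complex.I * ((c1 * Real.sqrt (1 + 3 * s1 ^ 2) * Real.sin k : ℝ) : ℂ))
        ∈ spectrum ℂ (Uhat θ0 θ1 k)) ∧
      ((-(2 * s0 ^ 2 * s1 ^ 2 * Real.cos k : ℝ) : ℂ) ∈ spectrum ℂ (Uhat θ0 θ1 k)) :=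
  Uhat_charpoly_factorization_ballistic_general θ0 θ1 c0 s0 c1 s1 hc0 hs0 hc1 hs1 h
end

section
/- For all real θ0, θ1, the matrix Û(0) has 1 as an eigenvalue: det(Û(0) − I₄) = 0. -/
open Matrix Complex

/-!
The row vector `(1, 1, 0, 0)` is a left eigenvector of `Û(0) = A² + B²` for the eigenvalue `1`:
the first two rows of `A² + B²` add up to `(c0² + s0² (c1² + s1²)) • (1, 1, 0, 0)`.
-/

theorem Matrix.det_sub_one_eq_zero_of_vecMul_eq_self {n R : Type*} [Fintype n] [DecidableEq n]
    [CommRing R] [IsDomain R] {M : Matrix n n R} {v : n → R} (hv : v ≠ 0) (h : v ᵥ* M = v) :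
    (M - 1).det = 0 :=
  exists_vecMul_eq_zero_iff.mp ⟨v, hv, by rw [vecMul_sub, h, vecMul_one, sub_self]⟩

theorem vecMul_Uhat_zero (θ0 θ1 : ℝ) :
    ![1, 1, 0, 0] ᵥ* Uhat θ0 θ1 0 = ![1, 1, 0, 0] := by
  have h0 := Complex.cos_sq_add_sin_sq (θ0 : ℂ)
  have h1 := Complex.cos_sq_add_sin_sq (θ1 : ℂ)
  ext j
  fin_cases j <;> simp [Uhat, Amat, Bmat, sq, vecMul, dotProduct, Fin.sum_univ_four]
  · linear_combination h0 + Complex.sin θ0 ^ 2 * h1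
  · linear_combination h0 + Complex.sin θ0 ^ 2 * h1
  · ring
  · ring

theorem Uhat_zero_has_eigenvalue_one (θ0 θ1 : ℝ) :
    (Uhat θ0 θ1 0 - (1 : Matrix (Fin 4) (Fin 4) ℂ)).det = 0 :=
  det_sub_one_eq_zero_of_vecMul_eq_self (by simp) (vecMul_Uhat_zero θ0 θ1)
end

section
/- Suppose cos θ0 ≠ sin θ0 · sin θ1 and sin θ0 · cos θ1 ≠ 0. Then every complex root λ of the quadratic equation λ² − (s0²·c1² − (c0 − s0·s1)²)·λ − 2·c0·s0·s1 = 0 satisfies |λ| < 1, where c0 = cos θ0, s0 = sin θ0, c1 = cos θ1, s1 = sin θ1. -/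
/-!
Jury's stability test for the monic real quadratic `z ^ 2 - b z - c`: its roots lie in the open
unit disc as soon as `|c| < 1` and the polynomial is positive at `1` and at `-1`. A pair of
non-real roots is conjugate, with squared modulus `-c`; a pair of real roots has product `-c`, so
one of them lies in `(-1, 1)`, and the signs at `±1` then trap the other one there too.
For the quadratic of the theorem, the values at `1` and `-1` are `2 (c0 - s0 s1) ^ 2` and
`2 (s0 c1) ^ 2`, and `|2 c0 s0 s1| ≤ |s1| < 1` because `c1 ≠ 0`.
-/

theorem abs_lt_one_of_quadratic_root {b c x : ℝ} (hc : |c| < 1)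
    (h₁ : 0 < 1 - b - c) (h₂ : 0 < 1 + b - c) (hx : x ^ 2 - b * x - c = 0) : |x| < 1 := by
  by_contra! hx₁
  set y := b - x
  have hxy : x * y = -c := by linear_combination -hx
  have hy : |y| < 1 := by
    by_contra! hy
    have : 1 ≤ |x * y| := by rw [abs_mul]; nlinarith [abs_nonneg y]
    rw [hxy, abs_neg] at this
    linarith
  rw [abs_lt] at hy
  have hx_lt : x < 1 := by
    have : 0 < (1 - x) * (1 - y) := by linear_combination h₁ + hx
    nlinarith
  have hx_gt : -1 < x := by
    have : 0 < (1 + x) * (1 + y) := by linear_combination h₂ + hx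
    nlinarith
  exact hx₁.not_gt (abs_lt.mpr ⟨hx_gt, hx_lt⟩)

theorem Complex.normSq_eq_neg_of_quadratic_root {b c : ℝ} {z : ℂ} (hz_im : z.im ≠ 0)
    (hz : z ^ 2 - (b : ℂ) * z - (c : ℂ) = 0) : normSq z = -c := by
  have h_re := congrArg re hz
  have h_im := congrArg im hz
  simp only [sq, sub_re, mul_re, ofReal_re, ofReal_im, sub_im, mul_im, zero_re, zero_im,
    zero_mul, sub_zero, add_zero] at h_re h_im
  have h_sum : 2 * z.re = b := mul_right_cancel₀ hz_im (by linear_combination h_im)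
  rw [normSq_apply]
  linear_combination -h_re + z.re * h_sum

theorem Complex.norm_lt_one_of_quadratic_root {b c : ℝ} (hc : |c| < 1)
    (h₁ : 0 < 1 - b - c) (h₂ : 0 < 1 + b - c) {z : ℂ}
    (hz : z ^ 2 - (b : ℂ) * z - (c : ℂ) = 0) : ‖z‖ < 1 := by
  by_cases hz_im : z.im = 0
  · have hz_re : z = (z.re : ℂ) := ext rfl (by simpa using hz_im)
    rw [hz_re, norm_real, Real.norm_eq_abs]
    rw [hz_re] at hz
    exact abs_lt_one_of_quadratic_root hc h₁ h₂ (by exact_mod_cast hz)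
  · rw [← sq_lt_one_iff₀ (norm_nonneg z), ← normSq_eq_norm_sq, normSq_eq_neg_of_quadratic_root hz_im hz]
    linarith [neg_abs_le c]

theorem quadratic_roots_lt_one (θ0 θ1 : ℝ) (c0 s0 c1 s1 : ℝ)
    (hc0 : c0 = Real.cos θ0) (hs0 : s0 = Real.sin θ0)
    (hc1 : c1 = Real.cos θ1) (hs1 : s1 = Real.sin θ1)
    (hne : c0 ≠ s0 * s1) (hsc : s0 * c1 ≠ 0) :
    ∀ lam : ℂ,
      lam ^ 2 - ((s0 ^ 2 * c1 ^ 2 - (c0 - s0 * s1) ^ 2 : ℝ) : ℂ) * lam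
          - ((2 * c0 * s0 * s1 : ℝ) : ℂ) = 0 →
        ‖lam‖ < 1 := by
  intro lam hlam
  have h₀ : s0 ^ 2 + c0 ^ 2 = 1 := hs0 ▸ hc0 ▸ Real.sin_sq_add_cos_sq θ0
  have h₁ : s1 ^ 2 + c1 ^ 2 = 1 := hs1 ▸ hc1 ▸ Real.sin_sq_add_cos_sq θ1
  have hc1_ne : c1 ≠ 0 := right_ne_zero_of_mul hsc
  have hne' : c0 - s0 * s1 ≠ 0 := sub_ne_zero.mpr hne
  refine Complex.norm_lt_one_of_quadratic_root ?_ ?_ ?_ hlam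
  · rw [← sq_lt_one_iff_abs_lt_one]
    calc (2 * c0 * s0 * s1) ^ 2 = (1 - (c0 ^ 2 - s0 ^ 2) ^ 2) * s1 ^ 2 := by
          linear_combination (s1 ^ 2 * (s0 ^ 2 + c0 ^ 2 + 1)) * h₀
      _ ≤ s1 ^ 2 := by nlinarith [sq_nonneg (c0 ^ 2 - s0 ^ 2), sq_nonneg s1]
      _ < 1 := by nlinarith [pow_pos (abs_pos.mpr hc1_ne) 2, sq_abs c1]
  · calc (0 : ℝ) < 2 * (c0 - s0 * s1) ^ 2 := by positivity
      _ = _ := by linear_combination h₀ + s0 ^ 2 * h₁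
  · calc (0 : ℝ) < 2 * (s0 * c1) ^ 2 := by positivity
      _ = _ := by linear_combination h₀ + s0 ^ 2 * h₁
end
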